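/- Let Ω: TM → V be a virtual immersion. Then the Ricci equation holds: ⟨R^⊥(X,Y)η, ζ⟩ = −⟨(S_η^t S_ζ − S_ζ^t S_η)X, Y⟩ for tangent vectors X,Y and normal vectors η,ζ, where R^⊥ is the curvature of the normal connection D^⊥ and S^t denotes the transpose of the shape operator. -/

import Mathlib

/-
Algebraic (Koszul-style) model of a Riemannian manifold `(M,g)` equipped with a
virtual immersion `Ω : TM → V`:
* `C` is the ring of smooth functions on `M`,
* `VF` is the `C`-module of vector fields on `M`, with Lie `bracket` and
  derivation action `act : VF → C → C`,
* `g : VF → VF → C` is the Riemannian metric,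
* `V` is the `C`-module of sections of the trivial bundle `M × V`, with the
  (pointwise) inner product `ip : V → V → C`,
* `Ω : VF →ₗ[C] V` is the virtual immersion (a `V`-valued one-form),
* `D : VF → V → V` is the flat connection on `M × V`,
* `tang : V →ₗ[C] VF` is the tangential part: it is characterized by
  `ip v (Ω Z) = g (tang v) Z`, so `Ω (tang v)` is the orthogonal projection of
  `v` onto `Ω(TM)` and `v - Ω (tang v)` is the normal part of `v`.
-/

variable {C : Type*} [CommRing C]
variable {VF : Type*} [AddCommGroup VF] [Module C VF]
variable {V : Type*} [AddCommGroup V] [Module C V]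

/-- The tangential connection `D^T_X Y = (D_X (Ω Y))^T`, viewed as a vector field. -/
def DT (Ω : VF →ₗ[C] V) (D : VF → V → V) (tang : V →ₗ[C] VF) (X Y : VF) : VF :=
  tang (D X (Ω Y))

/-- The second fundamental form `II(X,Y) = (D_X (Ω Y))^⊥`. -/
def II (Ω : VF →ₗ[C] V) (D : VF → V → V) (tang : V →ₗ[C] VF) (X Y : VF) : V :=
  D X (Ω Y) - Ω (tang (D X (Ω Y)))

/-- The shape operator `S_η(X) = -(D_X η)^T`. -/
def Shape (D : VF → V → V) (tang : V →ₗ[C] VF) (η : V) (X : VF) : VF :=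
  - tang (D X η)

/-- The curvature tensor `R(X,Y)Z = ∇_Y ∇_X Z - ∇_X ∇_Y Z + ∇_{[X,Y]} Z`,
where `∇ = D^T` is the Levi-Civita connection of `g` (valid for a virtual
immersion). -/
def Rcurv (Ω : VF →ₗ[C] V) (D : VF → V → V) (tang : V →ₗ[C] VF)
    (bracket : VF → VF → VF) (X Y Z : VF) : VF :=
  DT Ω D tang Y (DT Ω D tang X Z) - DT Ω D tang X (DT Ω D tang Y Z)
    + DT Ω D tang (bracket X Y) Z

/-- The normal connection `D^⊥_X η = (D_X η)^⊥`. -/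
def Dperp (Ω : VF →ₗ[C] V) (D : VF → V → V) (tang : V →ₗ[C] VF) (X : VF) (η : V) : V :=
  D X η - Ω (tang (D X η))

/-- The curvature of the normal connection (same sign convention as `Rcurv`). -/
def Rperp (Ω : VF →ₗ[C] V) (D : VF → V → V) (tang : V →ₗ[C] VF)
    (bracket : VF → VF → VF) (X Y : VF) (η : V) : V :=
  Dperp Ω D tang Y (Dperp Ω D tang X η) - Dperp Ω D tang X (Dperp Ω D tang Y η)
    + Dperp Ω D tang (bracket X Y) η

/-- The covariant derivative of the second fundamental form,
`(D_X II)(Y,Z) = D_X (II(Y,Z)) - II(∇_X Y, Z) - II(Y, ∇_X Z)`. -/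
def DII (Ω : VF →ₗ[C] V) (D : VF → V → V) (tang : V →ₗ[C] VF) (X Y Z : VF) : V :=
  D X (II Ω D tang Y Z) - II Ω D tang (DT Ω D tang X Y) Z
    - II Ω D tang Y (DT Ω D tang X Z)

/-
Projecting onto a normal section `ζ` kills the tangential corrections in `D^⊥`, so
`⟨R^⊥(X,Y)η, ζ⟩` is `⟨R^D(X,Y)η, ζ⟩` plus the two cross terms coming from
`⟨D_Y (Ω W), ζ⟩ = -⟨W, (D_Y ζ)^T⟩` (compatibility of `D` with `⟨·,·⟩`, as `⟨Ω W, ζ⟩ = 0`).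
Flatness of `D` makes the first term vanish and the cross terms are the shape-operator terms.
-/

theorem map_sub_of_map_add {M N : Type*} [AddGroup M] [AddGroup N] {f : M → N}
    (hf : ∀ x y, f (x + y) = f x + f y) (x y : M) : f (x - y) = f x - f y :=
  map_sub (AddMonoidHom.mk' f hf) x y

theorem map_sub_left_of_map_add_left {M N R : Type*} [AddGroup M] [AddGroup R] {f : M → N → R}
    (hf : ∀ x x' y, f (x + x') y = f x y + f x' y) (x x' : M) (y : N) :
    f (x - x') y = f x y - f x' y :=
  map_sub_of_map_add (f := (f · y)) (hf · · y) x x'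

theorem map_neg_neg_of_symm_of_map_add_left {M R : Type*} [AddGroup M] [AddCommGroup R]
    {f : M → M → R} (h_symm : ∀ x y, f x y = f y x)
    (hf : ∀ x x' y, f (x + x') y = f x y + f x' y) (x y : M) :
    f (-x) (-y) = f x y := by
  have neg_left : ∀ x y, f (-x) y = -f x y := fun x y =>
    map_neg (AddMonoidHom.mk' (f · y) (hf · · y)) x
  rw [neg_left, h_symm, neg_left, h_symm, neg_neg]

section RicciEquation

variable {act : VF → C → C} {g : VF → VF → C} {ip : V → V → C}
variable {Ω : VF →ₗ[C] V} {D : VF → V → V} {tang : V →ₗ[C] VF}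

theorem ip_D_Ω_of_normal (h_act_add : ∀ X (f f' : C), act X (f + f') = act X f + act X f')
    (h_ip_symm : ∀ u v, ip u v = ip v u)
    (hD_ip : ∀ X u v, act X (ip u v) = ip (D X u) v + ip u (D X v))
    (h_tang : ∀ v Z, ip v (Ω Z) = g (tang v) Z)
    {ζ : V} (hζ : ∀ Z, ip ζ (Ω Z) = 0) (X W : VF) :
    ip (D X (Ω W)) ζ = -g (tang (D X ζ)) W := by
  have h : act X (ip (Ω W) ζ) = 0 := by
    rw [h_ip_symm, hζ]
    exact map_zero (AddMonoidHom.mk' (act X) (h_act_add X))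
  rw [hD_ip, h_ip_symm (Ω W), h_tang] at h
  linear_combination h

theorem ip_Dperp_of_normal (h_ip_symm : ∀ u v, ip u v = ip v u)
    (h_ip_addl : ∀ u u' v, ip (u + u') v = ip u v + ip u' v)
    {ζ : V} (hζ : ∀ Z, ip ζ (Ω Z) = 0) (X : VF) (u : V) :
    ip (Dperp Ω D tang X u) ζ = ip (D X u) ζ := by
  rw [Dperp, map_sub_left_of_map_add_left h_ip_addl, h_ip_symm (Ω _), hζ, sub_zero]

theorem ip_Dperp_Dperp_of_normal
    (h_act_add : ∀ X (f f' : C), act X (f + f') = act X f + act X f')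
    (h_ip_symm : ∀ u v, ip u v = ip v u)
    (h_ip_addl : ∀ u u' v, ip (u + u') v = ip u v + ip u' v)
    (hD_addv : ∀ X u v, D X (u + v) = D X u + D X v)
    (hD_ip : ∀ X u v, act X (ip u v) = ip (D X u) v + ip u (D X v))
    (h_tang : ∀ v Z, ip v (Ω Z) = g (tang v) Z)
    {ζ : V} (hζ : ∀ Z, ip ζ (Ω Z) = 0) (X Y : VF) (η : V) :
    ip (Dperp Ω D tang Y (Dperp Ω D tang X η)) ζ
      = ip (D Y (D X η)) ζ + g (tang (D Y ζ)) (tang (D X η)) := by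
  rw [ip_Dperp_of_normal h_ip_symm h_ip_addl hζ, Dperp,
    map_sub_of_map_add (hD_addv Y), map_sub_left_of_map_add_left h_ip_addl,
    ip_D_Ω_of_normal h_act_add h_ip_symm hD_ip h_tang hζ, sub_neg_eq_add]

end RicciEquation

/-- `⟨S_η^t (S_ζ X), Y⟩ = ⟨S_ζ X, S_η Y⟩`, so the right-hand side is written out using `g`. -/
theorem stmt4_general
    (act : VF → C → C) (bracket : VF → VF → VF) (g : VF → VF → C) (ip : V → V → C)
    (Ω : VF →ₗ[C] V) (D : VF → V → V) (tang : V →ₗ[C] VF)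
    (h_act_add : ∀ X (f f' : C), act X (f + f') = act X f + act X f')
    (h_g_symm : ∀ X Y, g X Y = g Y X)
    (h_g_addl : ∀ X X' Y, g (X + X') Y = g X Y + g X' Y)
    (h_ip_symm : ∀ u v, ip u v = ip v u)
    (h_ip_addl : ∀ u u' v, ip (u + u') v = ip u v + ip u' v)
    (hD_addv : ∀ X u v, D X (u + v) = D X u + D X v)
    (hD_flat : ∀ X Y v, D X (D Y v) - D Y (D X v) = D (bracket X Y) v)
    (hD_ip : ∀ X u v, act X (ip u v) = ip (D X u) v + ip u (D X v))
    (h_tang : ∀ v Z, ip v (Ω Z) = g (tang v) Z) :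
    ∀ (X Y : VF) (η ζ : V), (∀ Z, ip η (Ω Z) = 0) → (∀ Z, ip ζ (Ω Z) = 0) →
      ip (Rperp Ω D tang bracket X Y η) ζ =
        -(g (Shape D tang ζ X) (Shape D tang η Y)
          - g (Shape D tang η X) (Shape D tang ζ Y)) := by
  intro X Y η ζ _ hζ
  have flat : ip (D X (D Y η)) ζ - ip (D Y (D X η)) ζ = ip (D (bracket X Y) η) ζ := by
    rw [← hD_flat, map_sub_left_of_map_add_left h_ip_addl]
  have h_DperpDperp := ip_Dperp_Dperp_of_normal h_act_add h_ip_symm h_ip_addl hD_addv hD_ip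
    h_tang hζ
  have g_neg_neg := map_neg_neg_of_symm_of_map_add_left h_g_symm h_g_addl
  rw [Rperp, h_ip_addl, map_sub_left_of_map_add_left h_ip_addl, h_DperpDperp, h_DperpDperp,
    ip_Dperp_of_normal h_ip_symm h_ip_addl hζ, Shape, Shape, Shape, Shape, g_neg_neg, g_neg_neg,
    h_g_symm (tang (D X η))]
  linear_combination -flat

/-- Ricci's equation
`⟨R^⊥(X,Y)η, ζ⟩ = -⟨(S_η^t S_ζ - S_ζ^t S_η) X, Y⟩` for a virtual immersion and
normal sections `η, ζ`.  Here `⟨S_η^t (S_ζ X), Y⟩ = ⟨S_ζ X, S_η Y⟩`, so the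
right-hand side is written out using the metric `g`. -/
theorem stmt4
    (act : VF → C → C) (bracket : VF → VF → VF) (g : VF → VF → C) (ip : V → V → C)
    (Ω : VF →ₗ[C] V) (D : VF → V → V) (tang : V →ₗ[C] VF)
    (h_act_add : ∀ X (f f' : C), act X (f + f') = act X f + act X f')
    (h_act_mul : ∀ X (f f' : C), act X (f * f') = f * act X f' + f' * act X f)
    (h_br_skew : ∀ X Y, bracket X Y = - bracket Y X)
    (h_br_leib : ∀ X (f : C) Y, bracket X (f • Y) = act X f • Y + f • bracket X Y)
    (h_g_symm : ∀ X Y, g X Y = g Y X)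
    (h_g_addl : ∀ X X' Y, g (X + X') Y = g X Y + g X' Y)
    (h_g_smull : ∀ (f : C) X Y, g (f • X) Y = f * g X Y)
    (h_g_nondeg : ∀ X, (∀ Y, g X Y = 0) → X = 0)
    (h_ip_symm : ∀ u v, ip u v = ip v u)
    (h_ip_addl : ∀ u u' v, ip (u + u') v = ip u v + ip u' v)
    (h_ip_smull : ∀ (f : C) u v, ip (f • u) v = f * ip u v)
    (hD_addX : ∀ X X' v, D (X + X') v = D X v + D X' v)
    (hD_smulX : ∀ (f : C) X v, D (f • X) v = f • D X v)
    (hD_addv : ∀ X u v, D X (u + v) = D X u + D X v)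
    (hD_leib : ∀ X (f : C) v, D X (f • v) = act X f • v + f • D X v)
    (hD_flat : ∀ X Y v, D X (D Y v) - D Y (D X v) = D (bracket X Y) v)
    (hD_ip : ∀ X u v, act X (ip u v) = ip (D X u) v + ip u (D X v))
    (h_tang : ∀ v Z, ip v (Ω Z) = g (tang v) Z)
    (ha : ∀ X Y, ip (Ω X) (Ω Y) = g X Y)
    (hb : ∀ X Y Z, ip (D X (Ω Y) - D Y (Ω X) - Ω (bracket X Y)) (Ω Z) = 0) :
    ∀ (X Y : VF) (η ζ : V), (∀ Z, ip η (Ω Z) = 0) → (∀ Z, ip ζ (Ω Z) = 0) →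
      ip (Rperp Ω D tang bracket X Y η) ζ =
        -(g (Shape D tang ζ X) (Shape D tang η Y)
          - g (Shape D tang η X) (Shape D tang ζ Y)) :=
  stmt4_general act bracket g ip Ω D tang h_act_add h_g_symm h_g_addl h_ip_symm h_ip_addl hD_addv
    hD_flat hD_ip h_tang
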